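/- arXiv:1402.4839 — 2 statements merged into one kernel-verified Lean document; each statement's English description precedes it below -/
import Mathlib

section
/- The irrational torus T_θ = ℝ/(ℤ + θℤ) with the quotient diffeology, for θ irrational, has indiscrete D-topology, and consequently every smooth map T_θ → ℝ is constant; hence T_θ is not functionally generated. -/
open Set

/-- A diffeology on a set `X`: for each open `U ⊆ ℝⁿ` a family of plots `U → X` (encoded as
total functions, where only the values on `U` matter) satisfying the covering condition,
the presheaf condition (precomposition with smooth maps) and the sheaf condition (locality). -/
structure PlotDiffeology (X : Type) : Type 1 where
  IsPlot : (n : ℕ) → (U : Set (Fin n → ℝ)) → IsOpen U → ((Fin n → ℝ) → X) → Prop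
  const_plot : ∀ (n : ℕ) (U : Set (Fin n → ℝ)) (hU : IsOpen U) (x : X),
    IsPlot n U hU fun _ => x
  congr_plot : ∀ (n : ℕ) (U : Set (Fin n → ℝ)) (hU : IsOpen U)
    (d d' : (Fin n → ℝ) → X), Set.EqOn d d' U → IsPlot n U hU d → IsPlot n U hU d'
  precomp_plot : ∀ (n m : ℕ) (U : Set (Fin n → ℝ)) (V : Set (Fin m → ℝ))
    (hU : IsOpen U) (hV : IsOpen V) (d : (Fin n → ℝ) → X) (f : (Fin m → ℝ) → Fin n → ℝ),
    IsPlot n U hU d → ContDiffOn ℝ (⊤ : ℕ∞) f V → Set.MapsTo f V U → IsPlot m V hV (d ∘ f)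
  locality : ∀ (n : ℕ) (U : Set (Fin n → ℝ)) (hU : IsOpen U) (d : (Fin n → ℝ) → X),
    (∀ u ∈ U, ∃ V : Set (Fin n → ℝ), ∃ hV : IsOpen V, u ∈ V ∧ V ⊆ U ∧ IsPlot n V hV d) →
    IsPlot n U hU d

/-- Inclusion of diffeologies: every plot of `D` is a plot of `D'`. -/
def DLe {X : Type} (D D' : PlotDiffeology X) : Prop :=
  ∀ (n : ℕ) (U : Set (Fin n → ℝ)) (hU : IsOpen U) (d : (Fin n → ℝ) → X),
    D.IsPlot n U hU d → D'.IsPlot n U hU d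

/-- `A ⊆ X` is D-open: its preimage under every plot is open. -/
def DOpen {X : Type} (D : PlotDiffeology X) (A : Set X) : Prop :=
  ∀ (n : ℕ) (U : Set (Fin n → ℝ)) (hU : IsOpen U) (d : (Fin n → ℝ) → X),
    D.IsPlot n U hU d → IsOpen {u | u ∈ U ∧ d u ∈ A}

/-- A smooth map of diffeological spaces sends plots to plots. -/
def DSmooth {X Y : Type} (D : PlotDiffeology X) (D' : PlotDiffeology Y) (f : X → Y) : Prop :=
  ∀ (n : ℕ) (U : Set (Fin n → ℝ)) (hU : IsOpen U) (d : (Fin n → ℝ) → X),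
    D.IsPlot n U hU d → D'.IsPlot n U hU (f ∘ d)

/-- `l : X → ℝ` (with only its values on `A` relevant) is a smooth functional on the
diffeological subspace `A ≺ X`: its composite with every plot of `X` with values in `A`
is an ordinary smooth function. -/
def SmoothFunctionalOn {X : Type} (D : PlotDiffeology X) (A : Set X) (l : X → ℝ) : Prop :=
  ∀ (n : ℕ) (U : Set (Fin n → ℝ)) (hU : IsOpen U) (d : (Fin n → ℝ) → X),
    D.IsPlot n U hU d → Set.MapsTo d U A → ContDiffOn ℝ (⊤ : ℕ∞) (l ∘ d) U

/-- `d : U → X` is continuous for the D-topology of `X` (and the Euclidean topology on `U`). -/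
def DContinuousOn {X : Type} (D : PlotDiffeology X) {n : ℕ} (U : Set (Fin n → ℝ))
    (d : (Fin n → ℝ) → X) : Prop :=
  ∀ A : Set X, DOpen D A → IsOpen {u | u ∈ U ∧ d u ∈ A}

/-- The family `F` of locally defined functionals (indexed by D-open subsets) generates the
diffeology `D`: any continuous `d : U → X` whose composites with all functionals of the family
are smooth is a plot. -/
def Generates {X : Type} (D : PlotDiffeology X) (F : Set X → Set (X → ℝ)) : Prop :=
  ∀ (n : ℕ) (U : Set (Fin n → ℝ)) (hU : IsOpen U) (d : (Fin n → ℝ) → X),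
    DContinuousOn D U d →
    (∀ A : Set X, DOpen D A → ∀ l ∈ F A,
      ContDiffOn ℝ (⊤ : ℕ∞) (l ∘ d) {u | u ∈ U ∧ d u ∈ A}) →
    D.IsPlot n U hU d

/-- A diffeological space is functionally generated if some family of locally defined smooth
functionals generates its diffeology. -/
def FunctionallyGenerated {X : Type} (D : PlotDiffeology X) : Prop :=
  ∃ F : Set X → Set (X → ℝ),
    (∀ A : Set X, DOpen D A → ∀ l ∈ F A, SmoothFunctionalOn D A l) ∧ Generates D F

/-- The relation `x ∼ y ↔ x - y ∈ ℤ + θℤ` on `ℝ`. -/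
def torusSetoid (θ : ℝ) : Setoid ℝ where
  r x y := ∃ a b : ℤ, x - y = (a : ℝ) + θ * (b : ℝ)
  iseqv := by
    constructor
    · exact fun x => ⟨0, 0, by push_cast; ring⟩
    · rintro x y ⟨a, b, h⟩
      exact ⟨-a, -b, by push_cast; linarith⟩
    · rintro x y z ⟨a, b, h⟩ ⟨c, d, h'⟩
      exact ⟨a + c, b + d, by push_cast; linarith⟩

/-- The irrational torus `T_θ = ℝ/(ℤ + θℤ)`. -/
def IrrationalTorus (θ : ℝ) : Type := Quotient (torusSetoid θ)


section AuxIrrTorus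

/-- The additive subgroup `ℤ + θℤ` of `ℝ`. -/
private def torusGroupAux (θ : ℝ) : AddSubgroup ℝ where
  carrier := {x | ∃ a b : ℤ, x = (a : ℝ) + θ * b}
  zero_mem' := ⟨0, 0, by push_cast; ring⟩
  add_mem' := by rintro x y ⟨a, b, hx⟩ ⟨c, d, hy⟩; exact ⟨a + c, b + d, by push_cast; subst hx hy; ring⟩
  neg_mem' := by rintro x ⟨a, b, hx⟩; exact ⟨-a, -b, by push_cast; subst hx; ring⟩

/-- For irrational `θ`, the subgroup `ℤ + θℤ` is dense in `ℝ`. -/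
private theorem torusGroup_denseAux (θ : ℝ) (hθ : Irrational θ) :
    ∀ y : ℝ, ∀ ε > 0, ∃ a b : ℤ, |y - ((a : ℝ) + θ * b)| < ε := by
  have hd : Dense (torusGroupAux θ : Set ℝ) := by
    rcases (torusGroupAux θ).dense_or_cyclic with h | ⟨g, hg⟩
    · exact h
    · exfalso
      have h1 : (1 : ℝ) ∈ torusGroupAux θ := ⟨1, 0, by push_cast; ring⟩
      have h2 : θ ∈ torusGroupAux θ := ⟨0, 1, by push_cast; ring⟩
      rw [hg, AddSubgroup.mem_closure_singleton] at h1 h2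
      obtain ⟨m, hm⟩ := h1
      obtain ⟨n, hn⟩ := h2
      have hm0 : (m : ℝ) ≠ 0 := by
        intro h
        rw [zsmul_eq_mul] at hm
        rw [h, zero_mul] at hm; exact one_ne_zero hm.symm
      apply hθ
      refine ⟨(n : ℚ) / (m : ℚ), ?_⟩
      rw [zsmul_eq_mul] at hm hn
      have hmn : (m : ℝ) * θ = n := by
        have : (m : ℝ) * (n * g) = n * (m * g) := by ring
        rw [hm, hn, mul_one] at this; exact this
      push_cast
      field_simp
      linarith [hmn]
  intro y ε hε
  have := hd y
  rw [Metric.mem_closure_iff] at this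
  obtain ⟨g, hg, hdist⟩ := this ε hε
  obtain ⟨a, b, rfl⟩ := hg
  exact ⟨a, b, by simpa [Real.dist_eq] using hdist⟩

/-- An interval between two distinct reals is not countable. -/
private theorem uIcc_not_countable {a b : ℝ} (hab : a ≠ b) : ¬ (Set.uIcc a b).Countable := by
  intro h
  have h0 := h.measure_zero (MeasureTheory.volume)
  rw [Real.volume_interval] at h0
  have : |b - a| ≤ 0 := by
    by_contra hc
    push_neg at hc
    rw [ENNReal.ofReal_eq_zero] at h0
    linarith
  have : b - a = 0 := abs_eq_zero.mp (le_antisymm this (abs_nonneg _))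
  exact hab (by linarith)

end AuxIrrTorus

/-- For `θ` irrational, the irrational torus `T_θ = ℝ/(ℤ + θℤ)` with the quotient diffeology
(whose plots locally lift to ordinary smooth maps into `ℝ`) has indiscrete D-topology, every
smooth map `T_θ → ℝ` is constant, and consequently `T_θ` is not functionally generated. -/
theorem irrational_torus_not_functionally_generated
    (θ : ℝ) (hθ : Irrational θ)
    (D : PlotDiffeology (IrrationalTorus θ))
    (hD : ∀ (n : ℕ) (U : Set (Fin n → ℝ)) (hU : IsOpen U) (d : (Fin n → ℝ) → IrrationalTorus θ),
      D.IsPlot n U hU d ↔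
        ∀ u ∈ U, ∃ V : Set (Fin n → ℝ), IsOpen V ∧ u ∈ V ∧ V ⊆ U ∧
          ∃ g : (Fin n → ℝ) → ℝ, ContDiffOn ℝ (⊤ : ℕ∞) g V ∧
            ∀ v ∈ V, d v = Quotient.mk (torusSetoid θ) (g v))
    (Dℝ : PlotDiffeology ℝ)
    (hDℝ : ∀ (n : ℕ) (U : Set (Fin n → ℝ)) (hU : IsOpen U) (d : (Fin n → ℝ) → ℝ),
      Dℝ.IsPlot n U hU d ↔ ContDiffOn ℝ (⊤ : ℕ∞) d U) :
    (∀ A : Set (IrrationalTorus θ), DOpen D A → A = ∅ ∨ A = Set.univ) ∧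
    (∀ f : IrrationalTorus θ → ℝ, DSmooth D Dℝ f → ∀ x y, f x = f y) ∧
    ¬ FunctionallyGenerated D := by
  classical
  set π : ℝ → IrrationalTorus θ := Quotient.mk (torusSetoid θ) with hπ
  -- basic facts about the quotient
  have hrel : ∀ x y : ℝ, (∃ a b : ℤ, x - y = (a : ℝ) + θ * b) → π x = π y :=
    fun x y h => Quotient.sound h
  have hrel' : ∀ x y : ℝ, π x = π y → ∃ a b : ℤ, x - y = (a : ℝ) + θ * b :=
    fun x y h => Quotient.exact h
  have hdense := torusGroup_denseAux θ hθ
  -- the canonical 1-dimensional plot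
  have hproj : ContDiffOn ℝ (⊤ : ℕ∞) (fun u : Fin 1 → ℝ => u 0) Set.univ :=
    ((ContinuousLinearMap.proj 0 : (Fin 1 → ℝ) →L[ℝ] ℝ).contDiff).contDiffOn
  have hp : D.IsPlot 1 Set.univ isOpen_univ (fun u => π (u 0)) := by
    rw [hD]
    intro u _
    exact ⟨Set.univ, isOpen_univ, Set.mem_univ _, Set.Subset.rfl,
      fun v => v 0, hproj, fun v _ => rfl⟩
  have hemb : Continuous (fun x : ℝ => fun _ : Fin 1 => x) :=
    continuous_pi fun _ => continuous_id
  -- Part 1: the D-topology is indiscrete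
  have part1 : ∀ A : Set (IrrationalTorus θ), DOpen D A → A = ∅ ∨ A = Set.univ := by
    intro A hA
    set S : Set ℝ := {x : ℝ | π x ∈ A} with hS
    have hSopen : IsOpen S := by
      have h1 := hA 1 Set.univ isOpen_univ (fun u => π (u 0)) hp
      have : S = (fun x : ℝ => fun _ : Fin 1 => x) ⁻¹'
          {u : Fin 1 → ℝ | u ∈ Set.univ ∧ π (u 0) ∈ A} := by
        ext x; simp [hS]
      rw [this]
      exact h1.preimage hemb
    have hSinv : ∀ x ∈ S, ∀ a b : ℤ, x + ((a : ℝ) + θ * b) ∈ S := by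
      intro x hx a b
      have : π (x + ((a : ℝ) + θ * b)) = π x := hrel _ _ ⟨a, b, by ring⟩
      simpa [hS, this] using hx
    by_cases hne : S = ∅
    · left
      ext x
      simp only [Set.mem_empty_iff_false, iff_false]
      intro hxA
      obtain ⟨r, hr⟩ := Quotient.exists_rep x
      have : r ∈ S := by simp [hS, hπ, hr, hxA]
      rw [hne] at this
      exact this
    · right
      have hSuniv : S = Set.univ := by
        obtain ⟨x₀, hx₀⟩ := Set.nonempty_iff_ne_empty.mpr hne
        ext y
        simp only [Set.mem_univ, iff_true]
        obtain ⟨ε, hε, hball⟩ := Metric.isOpen_iff.mp hSopen x₀ hx₀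
        obtain ⟨a, b, hab⟩ := hdense (y - x₀) ε hε
        have hmem : y - ((a : ℝ) + θ * b) ∈ S := by
          apply hball
          rw [Metric.mem_ball, Real.dist_eq]
          have : y - ((a : ℝ) + θ * b) - x₀ = y - x₀ - ((a : ℝ) + θ * b) := by ring
          rw [this]
          exact hab
        have := hSinv _ hmem a b
        simpa using this
      ext x
      simp only [Set.mem_univ, iff_true]
      obtain ⟨r, hr⟩ := Quotient.exists_rep x
      have : r ∈ S := hSuniv ▸ Set.mem_univ r
      rw [← hr]
      exact this
  -- Part 2: smooth functions to ℝ are constant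
  have part2 : ∀ f : IrrationalTorus θ → ℝ, DSmooth D Dℝ f → ∀ x y, f x = f y := by
    intro f hf x y
    have hplot := hf 1 Set.univ isOpen_univ (fun u => π (u 0)) hp
    rw [hDℝ] at hplot
    have hcont : Continuous (fun t : ℝ => f (π t)) := by
      have h1 : Continuous ((f ∘ fun u : Fin 1 → ℝ => π (u 0)) ∘ fun x : ℝ => fun _ : Fin 1 => x) :=
        ((hplot.continuousOn).mono (Set.subset_univ _)).comp_continuous hemb
          (fun _ => Set.mem_univ _)
      exact h1
    have key : ∀ r s : ℝ, f (π r) = f (π s) := by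
      intro r s
      set C : Set ℝ := {z : ℝ | f (π z) = f (π r)} with hC
      have hCclosed : IsClosed C := isClosed_eq (hcont) continuous_const
      have : s ∈ closure C := by
        rw [Metric.mem_closure_iff]
        intro ε hε
        obtain ⟨a, b, hab⟩ := hdense (s - r) ε hε
        refine ⟨r + ((a : ℝ) + θ * b), ?_, ?_⟩
        · show f (π (r + ((a : ℝ) + θ * b))) = f (π r)
          rw [hrel _ _ ⟨a, b, by ring⟩]
        · rw [Real.dist_eq]
          have : s - (r + ((a : ℝ) + θ * b)) = s - r - ((a : ℝ) + θ * b) := by ring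
          rw [this]
          exact hab
      rw [hCclosed.closure_eq] at this
      exact this.symm
    obtain ⟨r, hr⟩ := Quotient.exists_rep x
    obtain ⟨s, hs⟩ := Quotient.exists_rep y
    rw [← hr, ← hs]
    exact key r s
  refine ⟨part1, part2, ?_⟩
  -- Part 3: not functionally generated
  rintro ⟨F, hF1, hF2⟩
  -- the "bad" map, not a plot
  set c : (Fin 1 → ℝ) → ℝ := fun u => if u 0 = 0 then 0 else 1 / 2 with hc
  set d : (Fin 1 → ℝ) → IrrationalTorus θ := fun u => π (c u) with hd'
  have hbad : D.IsPlot 1 Set.univ isOpen_univ d := by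
    apply hF2 1 Set.univ isOpen_univ d
    · -- d is D-continuous since the D-topology is indiscrete
      intro A hA
      rcases part1 A hA with rfl | rfl
      · have : {u : Fin 1 → ℝ | u ∈ Set.univ ∧ d u ∈ (∅ : Set (IrrationalTorus θ))} = ∅ := by
          ext u; simp
        rw [this]; exact isOpen_empty
      · have : {u : Fin 1 → ℝ | u ∈ Set.univ ∧ d u ∈ Set.univ} = Set.univ := by
          ext u; simp
        rw [this]; exact isOpen_univ
    · -- composites with locally defined smooth functionals are smooth
      intro A hA l hl
      rcases part1 A hA with rfl | rfl
      · intro u hu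
        exact absurd hu.2 (Set.notMem_empty _)
      · have hls : SmoothFunctionalOn D Set.univ l := hF1 Set.univ hA l hl
        have hsm : DSmooth D Dℝ l := by
          intro n U hU p hp'
          rw [hDℝ]
          exact hls n U hU p hp' (fun u _ => Set.mem_univ _)
        have hconst := part2 l hsm
        have : ContDiffOn ℝ (⊤ : ℕ∞) (fun _ : Fin 1 → ℝ => l (π 0))
            {u : Fin 1 → ℝ | u ∈ Set.univ ∧ d u ∈ Set.univ} := contDiffOn_const
        exact this.congr (fun u _ => hconst (d u) (π 0))
  -- extract a local smooth lift at 0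
  rw [hD] at hbad
  obtain ⟨V, hVopen, h0V, -, g, hg, hdg⟩ := hbad 0 (Set.mem_univ _)
  obtain ⟨ε, hε, hball⟩ := Metric.isOpen_iff.mp hVopen 0 h0V
  set e : ℝ → (Fin 1 → ℝ) := fun t _ => t with he
  have hmem : ∀ t : ℝ, t ∈ Metric.ball (0 : ℝ) ε → e t ∈ V := by
    intro t ht
    apply hball
    rw [Metric.mem_ball]
    rw [dist_pi_lt_iff hε]
    intro i
    simpa [he, Real.dist_eq] using (by simpa [Real.dist_eq] using ht)
  set h : ℝ → ℝ := fun t => g (e t) with hh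
  have hhcont : ContinuousOn h (Metric.ball (0 : ℝ) ε) :=
    (hg.continuousOn).comp hemb.continuousOn hmem
  have hval : ∀ t : ℝ, t ∈ Metric.ball (0 : ℝ) ε →
      ∃ a b : ℤ, (if t = 0 then (0 : ℝ) else 1 / 2) - h t = (a : ℝ) + θ * b := by
    intro t ht
    have := hdg (e t) (hmem t ht)
    have heq : π (c (e t)) = π (g (e t)) := this
    have := hrel' _ _ heq
    simpa [hc, he, hh] using this
  have h0ball : (0 : ℝ) ∈ Metric.ball (0 : ℝ) ε := by simpa using hε
  have hIrr2 : ∀ a b : ℤ, (1 : ℝ) / 2 ≠ (a : ℝ) + θ * b := by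
    intro a b hab
    by_cases hb : b = 0
    · subst hb
      push_cast at hab
      have : (2 * a : ℤ) = 1 := by
        have : ((2 * a : ℤ) : ℝ) = 1 := by push_cast; linarith
        exact_mod_cast this
      omega
    · apply hθ
      refine ⟨(1 / 2 - (a : ℚ)) / (b : ℚ), ?_⟩
      have hb' : (b : ℝ) ≠ 0 := Int.cast_ne_zero.mpr hb
      push_cast
      rw [div_eq_iff hb']
      linarith [hab]
  by_cases hcase : ∀ t ∈ Metric.ball (0 : ℝ) ε, h t = h 0
  · -- h is constant: then 1/2 ∈ ℤ + θℤ, contradiction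
    have ht1 : ε / 2 ∈ Metric.ball (0 : ℝ) ε := by
      rw [Metric.mem_ball, Real.dist_eq]
      rw [abs_of_pos (by linarith)]
      linarith
    obtain ⟨a, b, hab⟩ := hval (ε / 2) ht1
    obtain ⟨a0, b0, hab0⟩ := hval 0 h0ball
    rw [if_neg (by positivity : ε / 2 ≠ 0)] at hab
    rw [if_pos rfl] at hab0
    have hhh := hcase (ε / 2) ht1
    apply hIrr2 (a - a0) (b - b0)
    push_cast
    rw [hhh] at hab
    linarith
  · -- h is not constant: IVT gives an uncountable set inside a countable one
    push_neg at hcase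
    obtain ⟨t0, ht0, hne⟩ := hcase
    set C : Set ℝ := Set.range (fun p : ℤ × ℤ => -((p.1 : ℝ) + θ * p.2)) ∪
        Set.range (fun p : ℤ × ℤ => 1 / 2 - ((p.1 : ℝ) + θ * p.2)) with hCdef
    have hCcount : C.Countable := (Set.countable_range _).union (Set.countable_range _)
    have hsub : Set.uIcc (0 : ℝ) t0 ⊆ Metric.ball (0 : ℝ) ε := by
      rw [Real.ball_eq_Ioo]
      exact Set.ordConnected_Ioo.uIcc_subset (by rwa [← Real.ball_eq_Ioo])
        (by rwa [← Real.ball_eq_Ioo])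
    have himg : ∀ t ∈ Metric.ball (0 : ℝ) ε, h t ∈ C := by
      intro t ht
      obtain ⟨a, b, hab⟩ := hval t ht
      by_cases ht0' : t = 0
      · rw [if_pos ht0'] at hab
        left
        exact ⟨(a, b), by simp only; linarith⟩
      · rw [if_neg ht0'] at hab
        right
        exact ⟨(a, b), by simp only; linarith⟩
    have hIVT := intermediate_value_uIcc (hhcont.mono hsub)
    have : Set.uIcc (h 0) (h t0) ⊆ C := by
      intro y hy
      obtain ⟨t, ht, rfl⟩ := hIVT hy
      exact himg t (hsub ht)
    exact uIcc_not_countable (fun hh' => hne hh'.symm) (hCcount.mono this)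
end

section
/- Let f : |X| → |Y| be a function between diffeological spaces, where the diffeology of Y is generated by a family {F_A}_{A ∈ τ_Y} of locally defined smooth functionals. Then f is smooth if and only if f is continuous for the D-topologies and for every A ∈ τ_Y and every l ∈ F_A, the composite l ∘ f|_{f^{-1}(A)} is smooth on the diffeological subspace f^{-1}(A) of X. -/
open Set

/-- Smoothness of maps into a functionally generated space can be tested by the generating
functionals: `f : X → Y` is smooth iff it is D-continuous and the composites `l ∘ f` restricted
to `f⁻¹(A)` are smooth on the corresponding diffeological subspaces, for all `A` D-open in `Y`
and `l` in the generating family. -/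
theorem smooth_iff_continuous_and_functionals_smooth
    {X Y : Type} (DX : PlotDiffeology X) (DY : PlotDiffeology Y)
    (F : Set Y → Set (Y → ℝ))
    (hsm : ∀ A : Set Y, DOpen DY A → ∀ l ∈ F A, SmoothFunctionalOn DY A l)
    (hgen : Generates DY F)
    (f : X → Y) :
    DSmooth DX DY f ↔
      ((∀ A : Set Y, DOpen DY A → DOpen DX (f ⁻¹' A)) ∧
       (∀ A : Set Y, DOpen DY A → ∀ l ∈ F A,
          SmoothFunctionalOn DX (f ⁻¹' A) (fun x => l (f x)))) := by
  constructor
  · intro hf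
    constructor
    · intro A hA n U hU d hd
      exact hA n U hU (f ∘ d) (hf n U hU d hd)
    · intro A hA l hl n U hU d hd hmaps
      exact hsm A hA l hl n U hU (f ∘ d) (hf n U hU d hd) hmaps
  · rintro ⟨h1, h2⟩ n U hU d hd
    apply hgen n U hU (f ∘ d)
    · intro A hA
      exact h1 A hA n U hU d hd
    · intro A hA l hl
      have hV : IsOpen {u | u ∈ U ∧ d u ∈ f ⁻¹' A} := h1 A hA n U hU d hd
      have hplot : DX.IsPlot n {u | u ∈ U ∧ d u ∈ f ⁻¹' A} hV d := by
        have := DX.precomp_plot n n U {u | u ∈ U ∧ d u ∈ f ⁻¹' A} hU hV d id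
          hd contDiffOn_id (fun u hu => hu.1)
        exact DX.congr_plot n _ hV _ d (fun u _ => rfl) this
      exact h2 A hA l hl n _ hV d hplot (fun u hu => hu.2)
end
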